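/- arXiv:quant-ph/0205091 — 4 statements merged into one kernel-verified Lean document; each statement's English description precedes it below -/
import Mathlib

section
/- Let A_1,...,A_N : H → H be linear operators on a finite-dimensional complex Hilbert space with A_{k'}† A_k = δ_{kk'} A_k† A_k and ∑_k A_k† A_k = 1. Setting Π_k = A_k† A_k and U = ∑_k A_k, one has A_k = U Π_k for every k, and the Π_k form a complete set of mutually orthogonal projections: Π_k Π_{k'} = δ_{kk'} Π_k and ∑_k Π_k = 1. -/
/-!
Write `U = ∑ k, A k`. Orthogonality gives `U† A k = A k† A k`, and summing over `k` shows that `U`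
is an isometry, `U† U = 1`. In finite dimension `U` is then unitary, so `U U† = 1`, whence
`A k = U U† A k = U Π k` and `Π k Π k' = A k† U U† A k' = A k† A k' = δ_{kk'} Π k`.

Only the star-ring structure of `H →ₗ[ℂ] H` and the fact that one-sided inverses are two-sided
there enter, so everything holds in any Dedekind-finite star ring.
-/

section

variable {R ι : Type*} [Semiring R] [StarRing R] [Fintype ι] [DecidableEq ι] {a : ι → R}

theorem star_sum_mul_of_orthogonal
    (hortho : ∀ k k', star (a k') * a k = if k = k' then star (a k) * a k else 0) (k : ι) :
    star (∑ k', a k') * a k = star (a k) * a k := by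
  rw [star_sum, Finset.sum_mul, Finset.sum_congr rfl fun k' _ ↦ hortho k k',
    Finset.sum_ite_eq, if_pos (Finset.mem_univ k)]

theorem star_sum_mul_sum_of_orthogonal
    (hortho : ∀ k k', star (a k') * a k = if k = k' then star (a k) * a k else 0)
    (hcomplete : ∑ k, star (a k) * a k = 1) :
    star (∑ k, a k) * ∑ k, a k = 1 := by
  rw [Finset.mul_sum, Finset.sum_congr rfl fun k _ ↦ star_sum_mul_of_orthogonal hortho k,
    hcomplete]

variable [IsDedekindFiniteMonoid R]

theorem sum_mul_star_sum_of_orthogonal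
    (hortho : ∀ k k', star (a k') * a k = if k = k' then star (a k) * a k else 0)
    (hcomplete : ∑ k, star (a k) * a k = 1) :
    (∑ k, a k) * star (∑ k, a k) = 1 :=
  mul_eq_one_comm.mp (star_sum_mul_sum_of_orthogonal hortho hcomplete)

theorem eq_sum_mul_star_mul_self_of_orthogonal
    (hortho : ∀ k k', star (a k') * a k = if k = k' then star (a k) * a k else 0)
    (hcomplete : ∑ k, star (a k) * a k = 1) (k : ι) :
    a k = (∑ k', a k') * (star (a k) * a k) := by
  rw [← star_sum_mul_of_orthogonal hortho k, ← mul_assoc,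
    sum_mul_star_sum_of_orthogonal hortho hcomplete, one_mul]

theorem star_mul_self_mul_star_mul_self_of_orthogonal
    (hortho : ∀ k k', star (a k') * a k = if k = k' then star (a k) * a k else 0)
    (hcomplete : ∑ k, star (a k) * a k = 1) (k k' : ι) :
    star (a k) * a k * (star (a k') * a k') = if k = k' then star (a k) * a k else 0 := by
  set U := ∑ k, a k
  have hleft : star (a k) * a k = star (a k) * U := by
    simpa using (congrArg star (star_sum_mul_of_orthogonal hortho k)).symm
  calc star (a k) * a k * (star (a k') * a k')
      = star (a k) * (U * star U) * a k' := by
        rw [hleft, ← star_sum_mul_of_orthogonal hortho k', mul_assoc, mul_assoc, mul_assoc]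
    _ = star (a k) * a k' := by rw [sum_mul_star_sum_of_orthogonal hortho hcomplete, mul_one]
    _ = if k = k' then star (a k) * a k else 0 := by
        rw [hortho k' k]
        rcases eq_or_ne k k' with rfl | hne
        · simp
        · simp [hne, hne.symm]

end

/-- With `A k` as in Statement 2, setting `Π k = (A k)† ∘ (A k)` and
`U = ∑ k, A k`, one has `A k = U ∘ Π k` for every `k`, and the `Π k` form a complete set of
mutually orthogonal (self-adjoint, idempotent) projections:
`Π k ∘ Π k' = δ_{kk'} Π k` and `∑ k, Π k = 1`. -/
theorem stmt_3 {H : Type*} [NormedAddCommGroup H] [InnerProductSpace ℂ H]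
    [FiniteDimensional ℂ H] (N : ℕ) (A : Fin N → (H →ₗ[ℂ] H))
    (h : ∀ k k', LinearMap.adjoint (A k') ∘ₗ A k =
      if k = k' then LinearMap.adjoint (A k) ∘ₗ A k else 0)
    (hsum : ∑ k, LinearMap.adjoint (A k) ∘ₗ A k = LinearMap.id) :
    (∀ k, A k = (∑ k', A k') ∘ₗ (LinearMap.adjoint (A k) ∘ₗ A k)) ∧
    (∀ k k', (LinearMap.adjoint (A k) ∘ₗ A k) ∘ₗ (LinearMap.adjoint (A k') ∘ₗ A k') =
      if k = k' then LinearMap.adjoint (A k) ∘ₗ A k else 0) ∧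
    (∀ k, LinearMap.adjoint (LinearMap.adjoint (A k) ∘ₗ A k) =
      LinearMap.adjoint (A k) ∘ₗ A k) ∧
    (∑ k, LinearMap.adjoint (A k) ∘ₗ A k = LinearMap.id) := by
  simp only [← LinearMap.star_eq_adjoint, ← Module.End.mul_eq_comp, ← Module.End.one_eq_id]
    at h hsum ⊢
  exact ⟨eq_sum_mul_star_mul_self_of_orthogonal h hsum,
    star_mul_self_mul_star_mul_self_of_orthogonal h hsum,
    fun k ↦ (IsSelfAdjoint.star_mul_self (A k)).star_eq, hsum⟩
end

section
/- Unitary operators U_1,...,U_N on H can be unambiguously discriminated with some (possibly entangled) input state iff they are linearly independent; formally: there exists a vector ψ ∈ H ⊗ H such that the vectors (U_k ⊗ 1) ψ are linearly independent if and only if U_1,...,U_N are linearly independent as operators. -/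
open TensorProduct

/-
If `ψ` witnesses independence of the `(U k ⊗ 1) ψ`, independence of the `U k`
follows because `A ↦ (A ⊗ 1) ψ` is linear. Conversely, for the (unnormalised) maximally
entangled vector `ψ = ∑ᵢ bᵢ ⊗ bᵢ` of a basis `b`, one has `(A ⊗ 1) ψ = ∑ᵢ A bᵢ ⊗ bᵢ`, which
determines every `A bᵢ`; so `A ↦ (A ⊗ 1) ψ` is injective and preserves linear independence.
-/

section

variable {R M N P ι : Type*} [CommSemiring R] [AddCommMonoid M] [Module R M]
  [AddCommMonoid N] [Module R N] [AddCommMonoid P] [Module R P]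

theorem LinearIndependent.of_rTensor_apply {f : ι → N →ₗ[R] P} (ψ : N ⊗[R] M)
    (h : LinearIndependent R fun k => (f k).rTensor M ψ) : LinearIndependent R f :=
  h.of_comp (LinearMap.applyₗ ψ ∘ₗ LinearMap.rTensorHom M)

namespace Module.Basis

variable [Fintype ι] (b : Basis ι R M)

noncomputable def maximallyEntangled : M ⊗[R] M := ∑ i, b i ⊗ₜ b i

theorem rTensor_maximallyEntangled (A : M →ₗ[R] N) :
    A.rTensor M b.maximallyEntangled = ∑ i, A (b i) ⊗ₜ b i := by
  simp only [maximallyEntangled, map_sum, LinearMap.rTensor_tmul]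

theorem rTensor_maximallyEntangled_injective :
    Function.Injective fun A : M →ₗ[R] N => A.rTensor M b.maximallyEntangled := by
  intro A B h
  have as_lsum : ∀ C : M →ₗ[R] N, C.rTensor M b.maximallyEntangled =
      Finsupp.lsum R (fun i => (TensorProduct.mk R N M).flip (b i))
        (Finsupp.equivFunOnFinite.symm fun i => C (b i)) := by
    intro C
    simp [rTensor_maximallyEntangled, Finsupp.sum_fintype]
  have hcoeff := TensorProduct.sum_tmul_basis_right_injective b
    (((as_lsum A).symm.trans h).trans (as_lsum B))
  exact b.ext fun i => congrFun (Finsupp.equivFunOnFinite.symm.injective hcoeff) i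

end Module.Basis

theorem LinearIndependent.rTensor_maximallyEntangled [Fintype ι] {κ : Type*}
    {f : κ → M →ₗ[R] N} (hf : LinearIndependent R f) (b : Module.Basis ι R M) :
    LinearIndependent R fun k => (f k).rTensor M b.maximallyEntangled :=
  hf.map_injOn (LinearMap.applyₗ b.maximallyEntangled ∘ₗ LinearMap.rTensorHom M)
    (b.rTensor_maximallyEntangled_injective.injOn)

end

theorem stmt_14_general {H : Type*} [NormedAddCommGroup H] [InnerProductSpace ℂ H]
    [FiniteDimensional ℂ H] (N : ℕ) (U : Fin N → (H →ₗ[ℂ] H)) :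
    (∃ ψ : H ⊗[ℂ] H, LinearIndependent ℂ
      (fun k => TensorProduct.map (U k) (LinearMap.id (R := ℂ) (M := H)) ψ)) ↔
    LinearIndependent ℂ U :=
  ⟨fun ⟨ψ, hψ⟩ => hψ.of_rTensor_apply ψ,
    fun hU => ⟨_, hU.rTensor_maximallyEntangled (Module.finBasis ℂ H)⟩⟩

/-- Unitary operators `U 1, ..., U N` on a finite-dimensional complex Hilbert
space `H` can be unambiguously discriminated with some (possibly entangled) input state iff
they are linearly independent: there exists `ψ ∈ H ⊗ H` such that the vectors
`(U k ⊗ 1) ψ` are linearly independent if and only if the `U k` are linearly independent as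
operators. -/
theorem stmt_14 {H : Type*} [NormedAddCommGroup H] [InnerProductSpace ℂ H]
    [FiniteDimensional ℂ H] (N : ℕ) (U : Fin N → (H →ₗ[ℂ] H))
    (hU : ∀ k, LinearMap.adjoint (U k) ∘ₗ U k = LinearMap.id ∧
      U k ∘ₗ LinearMap.adjoint (U k) = LinearMap.id) :
    (∃ ψ : H ⊗[ℂ] H, LinearIndependent ℂ
      (fun k => TensorProduct.map (U k) (LinearMap.id (R := ℂ) (M := H)) ψ)) ↔
    LinearIndependent ℂ U :=
  stmt_14_general N U
end

section
/- Define A_1, A_2 : ℂ² → ℂ⁴ by A_1 = (1/√2)(|x̃_1⟩⟨x_1| + |x̃_2⟩⟨x_2|) and A_2 = (1/√2)(|x̃_3⟩⟨x_1| + |x̃_4⟩⟨x_2|), where {x_1, x_2} and {x̃_1,...,x̃_4} are orthonormal bases. Then A_1† A_1 + A_2† A_2 = 1 on ℂ², and A_1, A_2 are locally linearly independent: for every nonzero ψ ∈ ℂ² and scalars α_1, α_2 not both zero, (α_1 A_1 + α_2 A_2) ψ ≠ 0. -/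
open scoped InnerProductSpace

/-- The rank-one operator `|x⟩⟨y| : v ↦ ⟪y, v⟫ • x`. -/
noncomputable def rankOne {H H' : Type*} [NormedAddCommGroup H] [InnerProductSpace ℂ H]
    [NormedAddCommGroup H'] [InnerProductSpace ℂ H'] (x : H') (y : H) : H →ₗ[ℂ] H' :=
  ((innerSL ℂ y).toLinearMap).smulRight x

lemma rankOne_apply {H H' : Type*} [NormedAddCommGroup H] [InnerProductSpace ℂ H]
    [NormedAddCommGroup H'] [InnerProductSpace ℂ H'] (x : H') (y : H) (v : H) :
    rankOne x y v = ⟪y, v⟫_ℂ • x := rfl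

/-- With `{x 0, x 1}` an orthonormal basis of a 2-dimensional space `H` and
`{x' 0, ..., x' 3}` an orthonormal basis of a 4-dimensional space `H'`, the operators
`A₁ = (1/√2)(|x' 0⟩⟨x 0| + |x' 1⟩⟨x 1|)` and `A₂ = (1/√2)(|x' 2⟩⟨x 0| + |x' 3⟩⟨x 1|)`
satisfy `A₁† A₁ + A₂† A₂ = 1` and are locally linearly independent: for every nonzero
`ψ ∈ H` and scalars `α₁, α₂` not both zero, `(α₁ • A₁ + α₂ • A₂) ψ ≠ 0`. -/
theorem stmt_17 {H H' : Type*} [NormedAddCommGroup H] [InnerProductSpace ℂ H]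
    [FiniteDimensional ℂ H] [NormedAddCommGroup H'] [InnerProductSpace ℂ H']
    [FiniteDimensional ℂ H']
    (x : OrthonormalBasis (Fin 2) ℂ H) (x' : OrthonormalBasis (Fin 4) ℂ H')
    (A₁ A₂ : H →ₗ[ℂ] H')
    (hA₁ : A₁ = ((Real.sqrt 2 : ℂ))⁻¹ • (rankOne (x' 0) (x 0) + rankOne (x' 1) (x 1)))
    (hA₂ : A₂ = ((Real.sqrt 2 : ℂ))⁻¹ • (rankOne (x' 2) (x 0) + rankOne (x' 3) (x 1))) :
    LinearMap.adjoint A₁ ∘ₗ A₁ + LinearMap.adjoint A₂ ∘ₗ A₂ = LinearMap.id ∧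
    ∀ ψ : H, ψ ≠ 0 → ∀ α₁ α₂ : ℂ, (α₁ ≠ 0 ∨ α₂ ≠ 0) →
      (α₁ • A₁ + α₂ • A₂) ψ ≠ 0 := by
  have hs : ((Real.sqrt 2 : ℂ))⁻¹ ≠ 0 := by
    simp [Real.sqrt_eq_zero']
  have hconj : starRingEnd ℂ ((Real.sqrt 2 : ℂ))⁻¹ = ((Real.sqrt 2 : ℂ))⁻¹ := by
    rw [map_inv₀, Complex.conj_ofReal]
  have hinv : ((Real.sqrt 2 : ℂ))⁻¹ * ((Real.sqrt 2 : ℂ))⁻¹ = (2 : ℂ)⁻¹ := by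
    rw [← mul_inv, ← Complex.ofReal_mul, Real.mul_self_sqrt (by norm_num)]
    norm_num
  have hon : ∀ i j : Fin 4, ⟪x' i, x' j⟫_ℂ = if i = j then 1 else 0 :=
    orthonormal_iff_ite.mp x'.orthonormal
  have happ : ∀ (u v : H') (a b : ℂ), ⟪a • u, b • v⟫_ℂ = starRingEnd ℂ a * b * ⟪u, v⟫_ℂ := by
    intro u v a b
    rw [inner_smul_left, inner_smul_right]; ring
  constructor
  · apply LinearMap.ext; intro v
    apply ext_inner_left ℂ
    intro w
    rw [LinearMap.add_apply, inner_add_right, LinearMap.comp_apply, LinearMap.comp_apply,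
      LinearMap.adjoint_inner_right, LinearMap.adjoint_inner_right]
    have e1 : ⟪A₁ w, A₁ v⟫_ℂ
        = (2:ℂ)⁻¹ * (⟪w, x 0⟫_ℂ * ⟪x 0, v⟫_ℂ + ⟪w, x 1⟫_ℂ * ⟪x 1, v⟫_ℂ) := by
      simp only [hA₁, LinearMap.smul_apply, LinearMap.add_apply, rankOne_apply, smul_add,
        inner_add_left, inner_add_right, happ, hon, inner_smul_left, inner_smul_right]
      simp only [← inner_conj_symm (x 0) w, ← inner_conj_symm (x 1) w, Complex.conj_conj,
        hconj, show ((0:Fin 4) = 1) = False from by simp,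
        show ((1:Fin 4) = 0) = False from by simp, if_true, if_false, mul_zero, mul_one]
      linear_combination (⟪x 0, v⟫_ℂ * ⟪w, x 0⟫_ℂ + ⟪x 1, v⟫_ℂ * ⟪w, x 1⟫_ℂ) * hinv
    have e2 : ⟪A₂ w, A₂ v⟫_ℂ
        = (2:ℂ)⁻¹ * (⟪w, x 0⟫_ℂ * ⟪x 0, v⟫_ℂ + ⟪w, x 1⟫_ℂ * ⟪x 1, v⟫_ℂ) := by
      simp only [hA₂, LinearMap.smul_apply, LinearMap.add_apply, rankOne_apply, smul_add,
        inner_add_left, inner_add_right, happ, hon, inner_smul_left, inner_smul_right]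
      simp only [← inner_conj_symm (x 0) w, ← inner_conj_symm (x 1) w, Complex.conj_conj,
        hconj, show ((2:Fin 4) = 3) = False from by simp,
        show ((3:Fin 4) = 2) = False from by simp, if_true, if_false, mul_zero, mul_one]
      linear_combination (⟪x 0, v⟫_ℂ * ⟪w, x 0⟫_ℂ + ⟪x 1, v⟫_ℂ * ⟪w, x 1⟫_ℂ) * hinv
    rw [e1, e2]
    have := x.sum_inner_mul_inner w v
    rw [Fin.sum_univ_two] at this
    rw [LinearMap.id_apply]
    rw [← this]
    ring
  · intro ψ hψ α₁ α₂ hα habs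
    set a := ⟪x 0, ψ⟫_ℂ with ha
    set b := ⟪x 1, ψ⟫_ℂ with hb
    have hAv : (α₁ • A₁ + α₂ • A₂) ψ
        = ((Real.sqrt 2 : ℂ))⁻¹ • ((α₁ * a) • x' 0 + (α₁ * b) • x' 1
          + (α₂ * a) • x' 2 + (α₂ * b) • x' 3) := by
      simp only [hA₁, hA₂, LinearMap.add_apply, LinearMap.smul_apply, rankOne_apply,
        ← ha, ← hb, smul_add, smul_smul]
      module
    rw [hAv] at habs
    have habs' : (α₁ * a) • x' 0 + (α₁ * b) • x' 1 + (α₂ * a) • x' 2 + (α₂ * b) • x' 3 = 0 := by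
      exact (smul_eq_zero.mp habs).resolve_left hs
    have hcoef : ∀ i : Fin 4, ⟪x' i, (α₁ * a) • x' 0 + (α₁ * b) • x' 1
        + (α₂ * a) • x' 2 + (α₂ * b) • x' 3⟫_ℂ = 0 := by
      intro i; rw [habs', inner_zero_right]
    have h0 := hcoef 0; have h1 := hcoef 1; have h2 := hcoef 2; have h3 := hcoef 3
    simp only [inner_add_right, inner_smul_right, hon] at h0 h1 h2 h3
    simp only [show ((0:Fin 4) = 1) = False from by decide, show ((0:Fin 4) = 2) = False from by decide, show ((0:Fin 4) = 3) = False from by decide, show ((1:Fin 4) = 0) = False from by decide, show ((1:Fin 4) = 2) = False from by decide, show ((1:Fin 4) = 3) = False from by decide, show ((2:Fin 4) = 0) = False from by decide, show ((2:Fin 4) = 1) = False from by decide, show ((2:Fin 4) = 3) = False from by decide, show ((3:Fin 4) = 0) = False from by decide, show ((3:Fin 4) = 1) = False from by decide, show ((3:Fin 4) = 2) = False from by decide,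
      if_true, if_false, if_pos rfl, mul_one, mul_zero, add_zero, zero_add] at h0 h1 h2 h3
    have hab : a ≠ 0 ∨ b ≠ 0 := by
      by_contra hcon
      push_neg at hcon
      apply hψ
      have := x.sum_repr' ψ
      rw [Fin.sum_univ_two, ← ha, ← hb, hcon.1, hcon.2] at this
      simpa using this.symm
    rcases hα with h | h <;> rcases hab with hc | hc
    · exact h (by rcases mul_eq_zero.mp h0 with h' | h' <;> [exact h'; exact absurd h' hc])
    · exact h (by rcases mul_eq_zero.mp h1 with h' | h' <;> [exact h'; exact absurd h' hc])
    · exact h (by rcases mul_eq_zero.mp h2 with h' | h' <;> [exact h'; exact absurd h' hc])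
    · exact h (by rcases mul_eq_zero.mp h3 with h' | h' <;> [exact h'; exact absurd h' hc])
end

section
/- Let A_1 = μ S and A_2 = √(1−|μ|²) · 1 on ℓ²(ℕ), where S is the unilateral right shift (S|n⟩ = |n+1⟩) and 0 < |μ| < 1. Then A_1† A_1 + A_2† A_2 = 1, and A_1, A_2 are locally linearly independent: for every nonzero ψ ∈ ℓ²(ℕ) and scalars α_1, α_2 not both zero, (α_1 A_1 + α_2 A_2) ψ ≠ 0. -/
open scoped ComplexInnerProductSpace
open ContinuousLinearMap

lemma aux_ext {H : Type*} [NormedAddCommGroup H] [InnerProductSpace ℂ H] [CompleteSpace H]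
    (e : HilbertBasis ℕ ℂ H) (x : H) (h : ∀ n, ⟪e n, x⟫ = 0) : x = 0 := by
  have : e.repr x = 0 := by
    ext i; simp [e.repr_apply_apply, h]
  simpa using e.repr.injective (by simpa using this)

/-- On `ℓ²(ℕ)` (a complex Hilbert space with Hilbert basis `{e n : n ∈ ℕ}`),
let `S` be the unilateral right shift (`S (e n) = e (n+1)`, `S† S = 1`), let `0 < ‖μ‖ < 1`,
and set `A₁ = μ • S`, `A₂ = √(1 - ‖μ‖²) • 1`.  Then `A₁† A₁ + A₂† A₂ = 1`, and `A₁, A₂`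
are locally linearly independent: for every nonzero `ψ` and scalars `α₁, α₂` not both zero,
`(α₁ • A₁ + α₂ • A₂) ψ ≠ 0`. -/
theorem stmt_18 {H : Type*} [NormedAddCommGroup H] [InnerProductSpace ℂ H]
    [CompleteSpace H] (e : HilbertBasis ℕ ℂ H) (S : H →L[ℂ] H)
    (hS : ∀ n : ℕ, S (e n) = e (n + 1))
    (hSiso : ContinuousLinearMap.adjoint S ∘L S = 1)
    (μ : ℂ) (hμ0 : 0 < ‖μ‖) (hμ1 : ‖μ‖ < 1)
    (A₁ A₂ : H →L[ℂ] H) (hA₁ : A₁ = μ • S)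
    (hA₂ : A₂ = (Real.sqrt (1 - ‖μ‖ ^ 2) : ℂ) • (1 : H →L[ℂ] H)) :
    ContinuousLinearMap.adjoint A₁ ∘L A₁ + ContinuousLinearMap.adjoint A₂ ∘L A₂ = 1 ∧
    ∀ ψ : H, ψ ≠ 0 → ∀ α₁ α₂ : ℂ, (α₁ ≠ 0 ∨ α₂ ≠ 0) →
      (α₁ • A₁ + α₂ • A₂) ψ ≠ 0 := by
  set c : ℝ := Real.sqrt (1 - ‖μ‖ ^ 2) with hc
  have hpos : (0:ℝ) < 1 - ‖μ‖ ^ 2 := by nlinarith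
  have hcpos : 0 < c := Real.sqrt_pos.mpr hpos
  have hcsq : c ^ 2 = 1 - ‖μ‖ ^ 2 := Real.sq_sqrt hpos.le
  have hμne : μ ≠ 0 := by simpa using hμ0.ne'
  have hortho : ∀ i j : ℕ, ⟪e i, e j⟫ = if i = j then 1 else 0 :=
    orthonormal_iff_ite.mp e.orthonormal
  constructor
  · have h1 : adjoint A₁ ∘L A₁ = ((‖μ‖ ^ 2 : ℝ) : ℂ) • (1 : H →L[ℂ] H) := by
      rw [hA₁, map_smulₛₗ, smul_comp, comp_smul, hSiso, smul_smul]
      congr 1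
      simp [RCLike.conj_mul]
    have h2 : adjoint A₂ ∘L A₂ = ((c ^ 2 : ℝ) : ℂ) • (1 : H →L[ℂ] H) := by
      rw [hA₂, map_smulₛₗ, smul_comp, comp_smul, smul_smul]
      have hone : adjoint (1 : H →L[ℂ] H) = 1 := by
        simp [ContinuousLinearMap.one_def, ContinuousLinearMap.adjoint_id]
      have hone2 : (1 : H →L[ℂ] H) ∘L (1 : H →L[ℂ] H) = 1 := by ext x; rfl
      rw [hone, hone2]
      congr 1
      rw [Complex.conj_ofReal]
      push_cast; ring
    rw [h1, h2, ← add_smul, hcsq]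
    push_cast
    rw [show ((‖μ‖:ℂ)^2 + (1 - (‖μ‖:ℂ)^2)) = 1 by ring, one_smul]
  · intro ψ hψ α₁ α₂ hα heq
    have heq' : (α₁ * μ) • S ψ + (α₂ * (c:ℂ)) • ψ = 0 := by
      have h := heq
      rw [hA₁, hA₂] at h
      simp only [ContinuousLinearMap.add_apply, ContinuousLinearMap.smul_apply,
        ContinuousLinearMap.one_apply, smul_smul] at h
      exact h
    rcases eq_or_ne α₁ 0 with h1 | h1
    · rcases hα with h | h
      · exact h h1
      have : (α₂ * (c:ℂ)) • ψ = 0 := by simpa [h1] using heq'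
      rcases smul_eq_zero.mp this with h' | h'
      · rcases mul_eq_zero.mp h' with h'' | h''
        · exact h h''
        · exact hcpos.ne' (by exact_mod_cast h'')
      · exact hψ h'
    · -- eigenvector case
      have hα₁μ : α₁ * μ ≠ 0 := mul_ne_zero h1 hμne
      set lam : ℂ := -(α₂ * c) / (α₁ * μ) with hlam
      have hSψ : S ψ = lam • ψ := by
        have h2 : (α₁ * μ) • S ψ = (-(α₂ * (c:ℂ))) • ψ := by
          rw [neg_smul]; exact eq_neg_of_add_eq_zero_left heq'
        have h3 := congrArg (fun x => (α₁ * μ)⁻¹ • x) h2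
        simp only [smul_smul] at h3
        rw [inv_mul_cancel₀ hα₁μ, one_smul] at h3
        rw [h3, hlam, div_eq_mul_inv, mul_comm]
      -- adjoint acts on basis
      have hadj0 : adjoint S (e 0) = 0 := by
        apply aux_ext e
        intro n
        rw [adjoint_inner_right, hS, hortho]
        simp
      have hadjn : ∀ n : ℕ, adjoint S (e (n + 1)) = e n := by
        intro n
        rw [← sub_eq_zero]
        apply aux_ext e
        intro k
        rw [inner_sub_right, adjoint_inner_right, hS, hortho, hortho]
        simp
      -- lam ≠ 0 via isometry
      have hnorm : ‖S ψ‖ = ‖ψ‖ := by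
        have h0 : ⟪S ψ, S ψ⟫ = ⟪ψ, ψ⟫ := by
          rw [← adjoint_inner_left]
          have : adjoint S (S ψ) = ψ := by
            have := congrArg (fun T => T ψ) hSiso
            simpa using this
          rw [this]
        rw [inner_self_eq_norm_sq_to_K, inner_self_eq_norm_sq_to_K] at h0
        have h0' : ‖S ψ‖ ^ 2 = ‖ψ‖ ^ 2 := by exact_mod_cast h0
        nlinarith [norm_nonneg (S ψ), norm_nonneg ψ]
      have hlamne : lam ≠ 0 := by
        intro h0
        rw [h0, zero_smul] at hSψ
        rw [hSψ, norm_zero] at hnorm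
        exact hψ (norm_eq_zero.mp hnorm.symm)
      -- all coefficients vanish
      have hcoef : ∀ n : ℕ, ⟪e n, ψ⟫ = 0 := by
        intro n
        induction n with
        | zero =>
          have : ⟪e 0, S ψ⟫ = 0 := by
            rw [← adjoint_inner_left, hadj0, inner_zero_left]
          rw [hSψ, inner_smul_right] at this
          exact (mul_eq_zero.mp this).resolve_left hlamne
        | succ n ih =>
          have : ⟪e (n+1), S ψ⟫ = ⟪e n, ψ⟫ := by
            rw [← adjoint_inner_left, hadjn]
          rw [hSψ, inner_smul_right, ih] at this
          exact (mul_eq_zero.mp this).resolve_left hlamne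
      exact hψ (aux_ext e ψ hcoef)
end
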